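/- (Euler–Maclaurin formula for ζ₂) Let l be a positive integer and let s₁, s₂ be complex numbers with Re s₂ > 1 and Re s₁ + Re s₂ > 2. Then ζ₂(s₁,s₂) = ζ(s₁+s₂−1)/(s₂−1) − ζ(s₁+s₂)/2 + ∑_{q=1}^{l} (s₂)_q · (B_{q+1}/(q+1)!) · ζ(s₁+s₂+q) − ∑_{n₁≥1} φ_l(n₁,s₂)/n₁^{s₁}. -/

import Mathlib

/-!
With `σᵢ = Re sᵢ`: since `(n₁ + n₂)^σ₂ ≥ n₁^α n₂^β` whenever `α + β = σ₂` with `α, β ≥ 0`, the double series is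
dominated by a product of two convergent `p`-series once `β > 1` and `σ₁ + α > 1`, so it may be
summed over `n₂` first. The inner sum is the tail `ζ(s₂) − ∑_{k ≤ n₁} k^{-s₂}`, and the definition
of `φ_l` rewrites this tail as `n₁^{1-s₂}/(s₂-1) − n₁^{-s₂}/2 + ∑_q (s₂)_q B_{q+1}/(q+1)! n₁^{-s₂-q}
− φ_l(n₁, s₂)`. Dividing by `n₁^{s₁}` and summing over `n₁`, every main term gives a zeta value.
-/

open Complex

/-- The Euler double zeta-function `ζ₂(s₁, s₂) = ∑_{n₁ ≥ 1} ∑_{n₂ ≥ 1} n₁^{-s₁} (n₁+n₂)^{-s₂}`. -/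
noncomputable def eulerZeta2 (s₁ s₂ : ℂ) : ℂ :=
  ∑' n : ℕ × ℕ,
    1 / (((n.1 : ℂ) + 1) ^ s₁ * (((n.1 : ℂ) + 1) + ((n.2 : ℂ) + 1)) ^ s₂)

/-- The Euler–Maclaurin remainder term
`φ_l(n,s) = ∑_{k=1}^{n} k^{-s} − { (n^{1−s}−1)/(1−s) + 1/(2n^s)
  − ∑_{q=1}^{l} (s)_q B_{q+1}/((q+1)!·n^{s+q}) + ζ(s) − 1/(s−1) }`,
where `(s)_q` is the ascending Pochhammer symbol and `B_q` the `q`-th Bernoulli number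
(with `B₁ = -1/2`, generating function `t/(eᵗ−1)`). -/
noncomputable def phi (l n : ℕ) (s : ℂ) : ℂ :=
  (∑ k ∈ Finset.Icc 1 n, 1 / ((k : ℂ) ^ s)) -
    (((n : ℂ) ^ (1 - s) - 1) / (1 - s) + 1 / (2 * (n : ℂ) ^ s) -
      (∑ q ∈ Finset.Icc 1 l,
        (ascPochhammer ℂ q).eval s * (bernoulli (q + 1) : ℂ) /
          (((q + 1).factorial : ℂ) * (n : ℂ) ^ (s + (q : ℂ)))) +
      riemannZeta s - 1 / (s - 1))

lemma hasSum_one_div_nat_add_one_cpow {s : ℂ} (hs : 1 < s.re) :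
    HasSum (fun n : ℕ => 1 / ((n : ℂ) + 1) ^ s) (riemannZeta s) := by
  rw [zeta_eq_tsum_one_div_nat_add_one_cpow hs]
  simpa using ((summable_nat_add_iff 1).mpr (Complex.summable_one_div_nat_cpow.mpr hs)).hasSum

lemma summable_one_div_nat_add_one_rpow {p : ℝ} (hp : 1 < p) :
    Summable fun n : ℕ => 1 / ((n : ℝ) + 1) ^ p := by
  simpa using (summable_nat_add_iff 1).mpr (Real.summable_one_div_nat_rpow.mpr hp)

lemma sum_range_one_div_nat_add_one_cpow (s : ℂ) (N : ℕ) :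
    ∑ i ∈ Finset.range N, 1 / ((i : ℂ) + 1) ^ s = ∑ k ∈ Finset.Icc 1 N, 1 / (k : ℂ) ^ s := by
  rw [Finset.range_eq_Ico, ← Finset.Ico_add_one_right_eq_Icc]
  simpa using Finset.sum_Ico_add' (fun k : ℕ => 1 / (k : ℂ) ^ s) 0 N 1

lemma hasSum_one_div_add_nat_add_one_cpow {s : ℂ} (hs : 1 < s.re) (N : ℕ) :
    HasSum (fun m : ℕ => 1 / ((N : ℂ) + ((m : ℂ) + 1)) ^ s)
      (riemannZeta s - ∑ k ∈ Finset.Icc 1 N, 1 / (k : ℂ) ^ s) := by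
  rw [← sum_range_one_div_nat_add_one_cpow]
  have hshift : (fun m : ℕ => 1 / ((N : ℂ) + ((m : ℂ) + 1)) ^ s) =
      fun m => 1 / (((m + N : ℕ) : ℂ) + 1) ^ s := by
    funext m
    push_cast
    ring_nf
  rw [hshift]
  exact (hasSum_nat_add_iff' N).mpr (hasSum_one_div_nat_add_one_cpow hs)

lemma rpow_mul_rpow_le_add_rpow_add {a b α β : ℝ} (ha : 0 ≤ a) (hb : 0 ≤ b)
    (hα : 0 ≤ α) (hβ : 0 ≤ β) : a ^ α * b ^ β ≤ (a + b) ^ (α + β) := by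
  rw [Real.rpow_add_of_nonneg (by positivity) hα hβ]
  gcongr <;> linarith

lemma summable_one_div_rpow_mul_add_rpow {σ₁ σ₂ : ℝ} (h₂ : 1 < σ₂) (h : 2 < σ₁ + σ₂) :
    Summable fun p : ℕ × ℕ =>
      1 / (((p.1 : ℝ) + 1) ^ σ₁ * (((p.1 : ℝ) + 1) + ((p.2 : ℝ) + 1)) ^ σ₂) := by
  obtain ⟨β, hβ₁, hβσ₂, hβσ⟩ : ∃ β : ℝ, 1 < β ∧ β ≤ σ₂ ∧ β < σ₁ + σ₂ - 1 :=
    ⟨min σ₂ ((σ₁ + σ₂) / 2), lt_min h₂ (by linarith), min_le_left _ _,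
      (min_le_right _ _).trans_lt (by linarith)⟩
  have hprod := (summable_one_div_nat_add_one_rpow (p := σ₁ + (σ₂ - β)) (by linarith)).mul_of_nonneg
    (summable_one_div_nat_add_one_rpow hβ₁) (fun _ => by positivity) (fun _ => by positivity)
  refine hprod.of_nonneg_of_le (fun _ => by positivity) fun ⟨n, m⟩ => ?_
  have hmono := rpow_mul_rpow_le_add_rpow_add (a := (n : ℝ) + 1) (b := (m : ℝ) + 1)
    (by positivity) (by positivity) (sub_nonneg.mpr hβσ₂) (by linarith)
  rw [sub_add_cancel] at hmono
  calc 1 / (((n : ℝ) + 1) ^ σ₁ * (((n : ℝ) + 1) + ((m : ℝ) + 1)) ^ σ₂)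
      ≤ 1 / (((n : ℝ) + 1) ^ σ₁ * (((n : ℝ) + 1) ^ (σ₂ - β) * ((m : ℝ) + 1) ^ β)) := by
        gcongr
    _ = 1 / ((n : ℝ) + 1) ^ (σ₁ + (σ₂ - β)) * (1 / ((m : ℝ) + 1) ^ β) := by
        rw [Real.rpow_add (by positivity)]
        ring

lemma norm_one_div_cpow_mul_cpow {x y : ℝ} (hx : 0 < x) (hy : 0 < y) (a b : ℂ) :
    ‖1 / ((x : ℂ) ^ a * (y : ℂ) ^ b)‖ = 1 / (x ^ a.re * y ^ b.re) := by
  rw [norm_div, norm_one, norm_mul, norm_cpow_eq_rpow_re_of_pos hx,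
    norm_cpow_eq_rpow_re_of_pos hy]

lemma summable_eulerZeta2_term {s₁ s₂ : ℂ} (h₂ : 1 < s₂.re) (h : 2 < s₁.re + s₂.re) :
    Summable fun p : ℕ × ℕ =>
      1 / (((p.1 : ℂ) + 1) ^ s₁ * (((p.1 : ℂ) + 1) + ((p.2 : ℂ) + 1)) ^ s₂) := by
  refine Summable.of_norm ((summable_one_div_rpow_mul_add_rpow h₂ h).congr fun p => ?_)
  have := norm_one_div_cpow_mul_cpow (x := (p.1 : ℝ) + 1) (y := ((p.1 : ℝ) + 1) + ((p.2 : ℝ) + 1))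
    (by positivity) (by positivity) s₁ s₂
  push_cast at this
  exact this.symm

lemma hasSum_riemannZeta_sub_sum_Icc_div_cpow {s₁ s₂ : ℂ} (h₂ : 1 < s₂.re) (h : 2 < s₁.re + s₂.re) :
    HasSum (fun n : ℕ =>
        (riemannZeta s₂ - ∑ k ∈ Finset.Icc 1 (n + 1), 1 / (k : ℂ) ^ s₂) / ((n : ℂ) + 1) ^ s₁)
      (eulerZeta2 s₁ s₂) := by
  refine (summable_eulerZeta2_term h₂ h).hasSum.prod_fiberwise fun n => ?_
  have := (hasSum_one_div_add_nat_add_one_cpow h₂ (n + 1)).div_const (((n : ℂ) + 1) ^ s₁)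
  push_cast at this
  simpa only [div_div, mul_comm] using this

lemma riemannZeta_sub_sum_Icc_eq (l n : ℕ) {s : ℂ} (hs : s ≠ 1) :
    riemannZeta s - ∑ k ∈ Finset.Icc 1 n, 1 / (k : ℂ) ^ s =
      (n : ℂ) ^ (1 - s) / (s - 1) - 1 / (2 * (n : ℂ) ^ s) +
        (∑ q ∈ Finset.Icc 1 l, (ascPochhammer ℂ q).eval s * (bernoulli (q + 1) : ℂ) /
          (((q + 1).factorial : ℂ) * (n : ℂ) ^ (s + (q : ℂ)))) - phi l n s := by
  have h₁ : 1 - s ≠ 0 := sub_ne_zero.mpr hs.symm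
  have h₂ : s - 1 ≠ 0 := sub_ne_zero.mpr hs
  rw [phi]
  field_simp
  ring

lemma riemannZeta_sub_sum_Icc_div_cpow (l n : ℕ) (s₁ : ℂ) {s₂ : ℂ} (hs₂ : s₂ ≠ 1) :
    (riemannZeta s₂ - ∑ k ∈ Finset.Icc 1 (n + 1), 1 / (k : ℂ) ^ s₂) / ((n : ℂ) + 1) ^ s₁ =
      1 / ((n : ℂ) + 1) ^ (s₁ + s₂ - 1) / (s₂ - 1) - 1 / ((n : ℂ) + 1) ^ (s₁ + s₂) / 2 +
        (∑ q ∈ Finset.Icc 1 l,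
          (ascPochhammer ℂ q).eval s₂ * ((bernoulli (q + 1) : ℂ) / ((q + 1).factorial : ℂ)) *
            (1 / ((n : ℂ) + 1) ^ (s₁ + s₂ + (q : ℂ)))) -
        phi l (n + 1) s₂ / ((n : ℂ) + 1) ^ s₁ := by
  have hx : (n : ℂ) + 1 ≠ 0 := Nat.cast_add_one_ne_zero n
  rw [riemannZeta_sub_sum_Icc_eq l (n + 1) hs₂, Nat.cast_add_one]
  generalize (n : ℂ) + 1 = x at hx ⊢
  have hsum : (∑ q ∈ Finset.Icc 1 l, (ascPochhammer ℂ q).eval s₂ * (bernoulli (q + 1) : ℂ) /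
        (((q + 1).factorial : ℂ) * x ^ (s₂ + (q : ℂ)))) / x ^ s₁ =
      ∑ q ∈ Finset.Icc 1 l,
        (ascPochhammer ℂ q).eval s₂ * ((bernoulli (q + 1) : ℂ) / ((q + 1).factorial : ℂ)) *
          (1 / x ^ (s₁ + s₂ + (q : ℂ))) := by
    rw [Finset.sum_div]
    refine Finset.sum_congr rfl fun q _ => ?_
    rw [add_assoc, cpow_add s₁ _ hx]
    ring
  rw [← hsum, cpow_sub _ _ hx, cpow_sub _ _ hx, cpow_add _ _ hx, cpow_one]
  field_simp

lemma hasSum_euler_maclaurin_main_part (l : ℕ) {s₁ s₂ : ℂ} (h : 2 < s₁.re + s₂.re) :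
    HasSum (fun n : ℕ =>
        1 / ((n : ℂ) + 1) ^ (s₁ + s₂ - 1) / (s₂ - 1) - 1 / ((n : ℂ) + 1) ^ (s₁ + s₂) / 2 +
          ∑ q ∈ Finset.Icc 1 l,
            (ascPochhammer ℂ q).eval s₂ * ((bernoulli (q + 1) : ℂ) / ((q + 1).factorial : ℂ)) *
              (1 / ((n : ℂ) + 1) ^ (s₁ + s₂ + (q : ℂ))))
      (riemannZeta (s₁ + s₂ - 1) / (s₂ - 1) - riemannZeta (s₁ + s₂) / 2 +
        ∑ q ∈ Finset.Icc 1 l,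
          (ascPochhammer ℂ q).eval s₂ * ((bernoulli (q + 1) : ℂ) / ((q + 1).factorial : ℂ)) *
            riemannZeta (s₁ + s₂ + (q : ℂ))) := by
  have hzeta (t : ℝ) (ht : 0 ≤ t) :=
    hasSum_one_div_nat_add_one_cpow (s := s₁ + s₂ - 1 + t) (by simp; linarith)
  have hq (q : ℕ) := (hzeta (q + 1) (by positivity)).mul_left
    ((ascPochhammer ℂ q).eval s₂ * ((bernoulli (q + 1) : ℂ) / ((q + 1).factorial : ℂ)))
  have h₀ := (hzeta 0 le_rfl).div_const (s₂ - 1)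
  have h₁ := (hzeta 1 zero_le_one).div_const 2
  push_cast at hq h₀ h₁
  simp only [add_zero, sub_add_cancel, sub_add_add_cancel] at hq h₀ h₁
  exact (h₀.sub h₁).add (hasSum_sum fun q _ => hq q)

theorem eulerZeta2_euler_maclaurin_general (l : ℕ) (s₁ s₂ : ℂ)
    (h₂ : 1 < s₂.re) (h : 2 < s₁.re + s₂.re) :
    eulerZeta2 s₁ s₂ =
      riemannZeta (s₁ + s₂ - 1) / (s₂ - 1) - riemannZeta (s₁ + s₂) / 2 +
        (∑ q ∈ Finset.Icc 1 l,
          (ascPochhammer ℂ q).eval s₂ * ((bernoulli (q + 1) : ℂ) / ((q + 1).factorial : ℂ)) *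
            riemannZeta (s₁ + s₂ + (q : ℂ))) -
        ∑' n : ℕ, phi l (n + 1) s₂ / (((n : ℂ) + 1) ^ s₁) := by
  have hs₂ : s₂ ≠ 1 := fun hs => by simp [hs] at h₂
  have hΦ := (hasSum_euler_maclaurin_main_part l h).sub (hasSum_riemannZeta_sub_sum_Icc_div_cpow h₂ h)
  simp only [riemannZeta_sub_sum_Icc_div_cpow l _ s₁ hs₂, sub_sub_cancel] at hΦ
  rw [hΦ.tsum_eq]
  ring

/-- Euler–Maclaurin formula for the Euler double zeta-function: for a positive integer `l`
and `Re s₂ > 1`, `Re s₁ + Re s₂ > 2`,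
`ζ₂(s₁,s₂) = ζ(s₁+s₂−1)/(s₂−1) − ζ(s₁+s₂)/2 + ∑_{q=1}^{l} (s₂)_q (B_{q+1}/(q+1)!) ζ(s₁+s₂+q)
  − ∑_{n₁ ≥ 1} φ_l(n₁,s₂)/n₁^{s₁}`. -/
theorem eulerZeta2_euler_maclaurin (l : ℕ) (hl : 0 < l) (s₁ s₂ : ℂ)
    (h₂ : 1 < s₂.re) (h : 2 < s₁.re + s₂.re) :
    eulerZeta2 s₁ s₂ =
      riemannZeta (s₁ + s₂ - 1) / (s₂ - 1) - riemannZeta (s₁ + s₂) / 2 +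
        (∑ q ∈ Finset.Icc 1 l,
          (ascPochhammer ℂ q).eval s₂ * ((bernoulli (q + 1) : ℂ) / ((q + 1).factorial : ℂ)) *
            riemannZeta (s₁ + s₂ + (q : ℂ))) -
        ∑' n : ℕ, phi l (n + 1) s₂ / (((n : ℂ) + 1) ^ s₁) :=
  eulerZeta2_euler_maclaurin_general l s₁ s₂ h₂ h
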